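/- arXiv:2204.12108 — 5 statements merged into one kernel-verified Lean document; each statement's English description precedes it below -/
import Mathlib

section
/- (Ideal current-frame map-feature Jacobian annihilates the unobservable directions of the imperfect augmented system.) For every J' ∈ ℝ^{2×3}, every R̂_I ∈ ℝ^{3×3}, every R_G ∈ SO(3), every p_F ∈ ℝ³, and every g ∈ ℝ³, the Jacobian H^C evaluated at the true values R̂_G = R_G and p̂_F = p_F, namely H^C = −J' R̂_Iᵀ [−(R_G p_F)_× 0₃ I₃ 0₃ −I₃ (R_G p_F)_× 0₃ 0₃ 0₃ 0₃ −R_G], satisfies H^C N*₁ = 0. -/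
open Matrix

abbrev V3 := Fin 3 → ℝ
abbrev M3 := Matrix (Fin 3) (Fin 3) ℝ

/-- The cross-product (skew-symmetric) matrix `(a)_×`. -/
def skew (a : V3) : M3 :=
  !![0, -a 2, a 1; a 2, 0, -a 0; -a 1, a 0, 0]

/-- Row/column index of the 33-dimensional right-invariant error
`(ξ_θ, ξ_v, ξ_p, ξ_pf, ξ_pG, ξ_θG, ξ_bg, ξ_ba, ξ_θKF, ξ_pKF, ξ_F)`: 11 blocks of 3. -/
abbrev Idx33 := Fin 11 × Fin 3

/-- Column index for the 33×10 unobservable-direction matrix: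
one single column followed by three 3-column blocks. -/
abbrev Cols10 := Fin 1 ⊕ Fin 3 × Fin 3

/-- 33×33 matrix from an 11×11 table of 3×3 blocks. -/
def bm11 (f : Fin 11 → Fin 11 → M3) : Matrix Idx33 Idx33 ℝ :=
  Matrix.of fun p q => f p.1 q.1 p.2 q.2

/-- The 33×33 propagation matrix `A*` of the imperfect augmented system:
the upper-left 24×24 block is the perfect-system propagation matrix,
all other entries are zero. -/
def AStar (g : V3) (RI : M3) (v pI pf pG : V3) : Matrix Idx33 Idx33 ℝ :=
  bm11 ![![0, 0, 0, 0, 0, 0, -RI, 0, 0, 0, 0],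
         ![skew g, 0, 0, 0, 0, 0, -(skew v * RI), -RI, 0, 0, 0],
         ![0, 1, 0, 0, 0, 0, -(skew pI * RI), 0, 0, 0, 0],
         ![0, 0, 0, 0, 0, 0, -(skew pf * RI), 0, 0, 0, 0],
         ![0, 0, 0, 0, 0, 0, -(skew pG * RI), 0, 0, 0, 0],
         ![0, 0, 0, 0, 0, 0, 0, 0, 0, 0, 0],
         ![0, 0, 0, 0, 0, 0, 0, 0, 0, 0, 0],
         ![0, 0, 0, 0, 0, 0, 0, 0, 0, 0, 0],
         ![0, 0, 0, 0, 0, 0, 0, 0, 0, 0, 0],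
         ![0, 0, 0, 0, 0, 0, 0, 0, 0, 0, 0],
         ![0, 0, 0, 0, 0, 0, 0, 0, 0, 0, 0]]

/-- The 33×10 unobservable-direction matrix `N*₁` (parametric in `R_G`; `N*₃` is the
same matrix evaluated at the first-estimate `R̂_{G0}`). -/
def NStar1 (g pF : V3) (RG : M3) : Matrix Idx33 Cols10 ℝ :=
  Matrix.of fun p j =>
    Sum.elim
      (fun _ => (![g, 0, 0, 0, 0, g, 0, 0, 0, 0, 0] : Fin 11 → V3) p.1 p.2)
      (fun q =>
        (![![0, 0, 0], ![0, 0, 0], ![1, 0, 0], ![1, 0, 0], ![1, -RG, 0],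
           ![0, 0, 1], ![0, 0, 0], ![0, 0, 0], ![0, 0, -RGᵀ], ![0, 1, 0],
           ![0, 1, skew pF * RGᵀ]] : Fin 11 → Fin 3 → M3) p.1 q.1 p.2 q.2) j

/-- A 2×33 measurement Jacobian `B ⬝ [f₀ ⋯ f₁₀]` from a 2×3 factor `B`
and an 11-tuple of 3×3 blocks. -/
def rowJac (B : Matrix (Fin 2) (Fin 3) ℝ) (f : Fin 11 → M3) : Matrix (Fin 2) Idx33 ℝ :=
  Matrix.of fun r p => (B * f p.1) r p.2

/-- `SO(3)`: real 3×3 matrices with `Rᵀ R = I` and `det R = 1`. -/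
def SO3 : Set M3 := {R | Rᵀ * R = 1 ∧ R.det = 1}

lemma skew_conj (R : M3) (hR : R ∈ SO3) (p : V3) :
    R * (skew p * Rᵀ) = skew (R *ᵥ p) := by
  obtain ⟨h1, h2⟩ := hR
  have hadj : adjugate R = Rᵀ := by
    have h3 : R * adjugate R = 1 := by rw [Matrix.mul_adjugate, h2, one_smul]
    calc adjugate R = (Rᵀ * R) * adjugate R := by rw [h1, one_mul]
      _ = Rᵀ * (R * adjugate R) := by rw [Matrix.mul_assoc]
      _ = Rᵀ := by rw [h3, mul_one]
  rw [adjugate_fin_three] at hadj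
  have e : ∀ i j : Fin 3, _ = R j i := fun i j => congrFun (congrFun hadj i) j
  have e00 := e 0 0; have e01 := e 0 1; have e02 := e 0 2
  have e10 := e 1 0; have e11 := e 1 1; have e12 := e 1 2
  have e20 := e 2 0; have e21 := e 2 1; have e22 := e 2 2
  simp only [Matrix.cons_val', Matrix.cons_val_zero, Matrix.cons_val_one, Matrix.head_cons,
    Matrix.empty_val', Matrix.cons_val_fin_one, Matrix.of_apply, Matrix.cons_val_succ,
    Matrix.cons_val_two, Matrix.tail_cons, Matrix.transpose_apply]
    at e00 e01 e02 e10 e11 e12 e20 e21 e22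
  simp only [Matrix.vecHead] at e20 e21 e22
  ext i j
  fin_cases i <;> fin_cases j <;>
    simp [skew, Matrix.mul_apply, Matrix.mulVec, dotProduct, Fin.sum_univ_succ,
      Matrix.vecHead, Matrix.vecTail, -Matrix.cons_mul] <;>
    [skip; linear_combination -(p 0) * e02 - (p 1) * e12 - (p 2) * e22;
     linear_combination (p 0) * e01 + (p 1) * e11 + (p 2) * e21;
     linear_combination (p 0) * e02 + (p 1) * e12 + (p 2) * e22; skip;
     linear_combination -(p 0) * e00 - (p 1) * e10 - (p 2) * e20;
     linear_combination -(p 0) * e01 - (p 1) * e11 - (p 2) * e21;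
     linear_combination (p 0) * e00 + (p 1) * e10 + (p 2) * e20; skip] <;>
    ring

lemma rowJac_mul_eq_zero (B : Matrix (Fin 2) (Fin 3) ℝ) (f : Fin 11 → M3)
    (N : Matrix Idx33 Cols10 ℝ)
    (h : ∀ (j : Cols10) (l : Fin 3), ∑ i : Fin 11, ∑ k : Fin 3, f i l k * N (i, k) j = 0) :
    rowJac B f * N = 0 := by
  ext r j
  simp only [Matrix.mul_apply, rowJac, Matrix.of_apply, Matrix.zero_apply]
  rw [Fintype.sum_prod_type]
  have step : ∀ i : Fin 11, (∑ k : Fin 3, (∑ l : Fin 3, B r l * f i l k) * N (i, k) j)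
      = ∑ l : Fin 3, B r l * ∑ k : Fin 3, f i l k * N (i, k) j := by
    intro i
    simp_rw [Finset.sum_mul, Finset.mul_sum, mul_assoc]
    exact Finset.sum_comm
  calc (∑ i : Fin 11, ∑ k : Fin 3, (∑ l : Fin 3, B r l * f i l k) * N (i, k) j)
      = ∑ i : Fin 11, ∑ l : Fin 3, B r l * ∑ k : Fin 3, f i l k * N (i, k) j :=
        Finset.sum_congr rfl fun i _ => step i
    _ = ∑ l : Fin 3, ∑ i : Fin 11, B r l * ∑ k : Fin 3, f i l k * N (i, k) j :=
        Finset.sum_comm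
    _ = ∑ l : Fin 3, B r l * ∑ i : Fin 11, ∑ k : Fin 3, f i l k * N (i, k) j := by
        simp_rw [Finset.mul_sum]
    _ = 0 := by simp [h j]

/-- The ideal current-frame map-feature Jacobian (evaluated at the true values)
annihilates the unobservable directions of the imperfect augmented system. -/
theorem HC_ideal_annihilates_NStar1 (J' : Matrix (Fin 2) (Fin 3) ℝ) (RI : M3)
    (RG : M3) (hRG : RG ∈ SO3) (pF g : V3) :
    rowJac (-(J' * RIᵀ))
        ![-skew (RG *ᵥ pF), 0, 1, 0, -1, skew (RG *ᵥ pF), 0, 0, 0, 0, -RG] *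
      NStar1 g pF RG = 0 := by
  apply rowJac_mul_eq_zero
  intro j l
  have hS := skew_conj RG hRG pF
  rcases j with j | ⟨q, c⟩
  · fin_cases l <;>
      simp [NStar1, skew, Fin.sum_univ_succ, Matrix.neg_apply] <;> ring
  · simp only [NStar1, Matrix.of_apply, Sum.elim_inr, Fin.sum_univ_succ, Fin.sum_univ_zero,
      Matrix.cons_val_zero, Matrix.cons_val_one, Matrix.head_cons, Matrix.cons_val_succ,
      ← Matrix.mul_apply]
    fin_cases q
    · simp
    · simp
    · simp [Matrix.neg_mul, hS]
end

section
/- (Keyframe map-feature Jacobian annihilates the unobservable directions of the imperfect augmented system.) For every J* ∈ ℝ^{2×3}, every R_KF ∈ ℝ^{3×3}, every R_G ∈ ℝ^{3×3}, every p_F ∈ ℝ³, and every g ∈ ℝ³, the keyframe Jacobian evaluated with map-feature estimate p̂_F = p_F, namely H^{KF} = −J* R_KFᵀ [0₃ 0₃ 0₃ 0₃ 0₃ 0₃ 0₃ 0₃ −(p_F)_× I₃ −I₃], satisfies H^{KF} N*₁ = 0. -/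
open Matrix

/-! Both factors are block matrices, so `H^{KF} N*₁ = −J* R_KFᵀ ∑ᵢ fᵢ Nᵢ`, where `fᵢ` are the
eleven 3×3 blocks of the Jacobian and `Nᵢ` the eleven 3×10 block rows `[c | A | B | C]` of `N*₁`.
Only the θKF, pKF and F blocks of the Jacobian are nonzero, and against the block rows
`[0 | 0 | 0 | −R_Gᵀ]`, `[0 | 0 | I | 0]`, `[0 | 0 | I | (p_F)_× R_Gᵀ]` they give
`[0 | 0 | I − I | (p_F)_× R_Gᵀ − (p_F)_× R_Gᵀ] = 0`. -/

def blockRow (c : V3) (A B C : M3) : Matrix (Fin 3) Cols10 ℝ :=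
  of fun a j => Sum.elim (fun _ => c a) (fun q => ![A, B, C] q.1 a q.2) j

@[simp]
lemma blockRow_zero : blockRow 0 0 0 0 = 0 := by
  ext a (_ | ⟨q, b⟩)
  · rfl
  · fin_cases q <;> rfl

@[simp]
lemma blockRow_add (c c' : V3) (A A' B B' C C' : M3) :
    blockRow c A B C + blockRow c' A' B' C' = blockRow (c + c') (A + A') (B + B') (C + C') := by
  ext a (_ | ⟨q, b⟩)
  · rfl
  · fin_cases q <;> rfl

@[simp]
lemma neg_blockRow (c : V3) (A B C : M3) :
    -blockRow c A B C = blockRow (-c) (-A) (-B) (-C) := by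
  ext a (_ | ⟨q, b⟩)
  · rfl
  · fin_cases q <;> rfl

@[simp]
lemma mul_blockRow (M : M3) (c : V3) (A B C : M3) :
    M * blockRow c A B C = blockRow (M *ᵥ c) (M * A) (M * B) (M * C) := by
  ext a (_ | ⟨q, b⟩)
  · rfl
  · fin_cases q <;> rfl

def blockCols (f : Fin 11 → M3) : Matrix (Fin 3) Idx33 ℝ :=
  of fun k p => f p.1 k p.2

lemma rowJac_eq_mul_blockCols (B : Matrix (Fin 2) (Fin 3) ℝ) (f : Fin 11 → M3) :
    rowJac B f = B * blockCols f :=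
  rfl

lemma blockCols_mul {n : Type*} (f : Fin 11 → M3) (N : Matrix Idx33 n ℝ) :
    blockCols f * N = ∑ i, f i * N.submatrix (Prod.mk i) id := by
  ext k j
  simp [blockCols, mul_apply, Matrix.sum_apply, Fintype.sum_prod_type]

lemma NStar1_submatrix (g pF : V3) (RG : M3) (i : Fin 11) :
    (NStar1 g pF RG).submatrix (Prod.mk i) id =
      ![blockRow g 0 0 0, 0, blockRow 0 1 0 0, blockRow 0 1 0 0, blockRow 0 1 (-RG) 0,
        blockRow g 0 0 1, 0, 0, blockRow 0 0 0 (-RGᵀ), blockRow 0 0 1 0,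
        blockRow 0 0 1 (skew pF * RGᵀ)] i := by
  ext a (_ | ⟨q, b⟩) <;> fin_cases i <;> try fin_cases q
  all_goals rfl

/-- The keyframe map-feature Jacobian (with map-feature estimate `p̂_F = p_F`)
annihilates the unobservable directions of the imperfect augmented system. -/
theorem HKF_annihilates_NStar1 (Jstar : Matrix (Fin 2) (Fin 3) ℝ) (RKF RG : M3)
    (pF g : V3) :
    rowJac (-(Jstar * RKFᵀ))
        ![0, 0, 0, 0, 0, 0, 0, 0, -skew pF, 1, -1] * NStar1 g pF RG = 0 := by
  have hblocks : blockCols ![0, 0, 0, 0, 0, 0, 0, 0, -skew pF, 1, -1] * NStar1 g pF RG = 0 := by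
    simp [blockCols_mul, Fin.sum_univ_succ, NStar1_submatrix]
  rw [rowJac_eq_mul_blockCols, Matrix.mul_assoc, hblocks, Matrix.mul_zero]
end

section
/- If g ∈ ℝ³ is nonzero, then for every R_G ∈ ℝ^{3×3} and p_F ∈ ℝ³ the 33×10 matrix N*₁ has rank 10; i.e., the ten (four plus six) unobservable directions of the ideal imperfect augmented system under the invariant EKF are linearly independent. In particular, N*₁ᵀ N*₁ is invertible. -/
open Matrix

lemma vec11_five {α : Type*} (a0 a1 a2 a3 a4 a5 a6 a7 a8 a9 a10 : α) :
    ![a0,a1,a2,a3,a4,a5,a6,a7,a8,a9,a10] 5 = a5 := rfl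

lemma vec11_nine {α : Type*} (a0 a1 a2 a3 a4 a5 a6 a7 a8 a9 a10 : α) :
    ![a0,a1,a2,a3,a4,a5,a6,a7,a8,a9,a10] 9 = a9 := rfl

lemma NStar1_inj (g pF : V3) (hg : g ≠ 0) (RG : M3) (x : Cols10 → ℝ)
    (h : (NStar1 g pF RG).mulVec x = 0) : x = 0 := by
  have key : ∀ b : Fin 11, ∀ i : Fin 3, ((NStar1 g pF RG).mulVec x) (b, i) = 0 :=
    fun b i => congrFun h (b, i)
  have ha : x (Sum.inl 0) = 0 := by
    obtain ⟨i, hi⟩ : ∃ i, g i ≠ 0 := by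
      by_contra hc; push_neg at hc; exact hg (funext fun i => hc i)
    have hk := key 0 i
    simp [NStar1, Matrix.mulVec, dotProduct, Fintype.sum_sum_type, Fintype.sum_prod_type,
      Fin.sum_univ_succ, -Matrix.cons_val', Matrix.one_apply, vec11_five, vec11_nine] at hk
    rcases hk with hk | hk
    · exact absurd hk hi
    · exact hk
  have h2 : ∀ i : Fin 3, x (Sum.inr (0, i)) = 0 := by
    intro i
    have hk := key 2 i
    fin_cases i <;>
      simpa [NStar1, Matrix.mulVec, dotProduct, Fintype.sum_sum_type, Fintype.sum_prod_type,
        Fin.sum_univ_succ, -Matrix.cons_val', Matrix.one_apply, vec11_five, vec11_nine] using hk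
  have h9 : ∀ i : Fin 3, x (Sum.inr (1, i)) = 0 := by
    intro i
    have hk := key 9 i
    fin_cases i <;>
      simpa [NStar1, Matrix.mulVec, dotProduct, Fintype.sum_sum_type, Fintype.sum_prod_type,
        Fin.sum_univ_succ, -Matrix.cons_val', Matrix.one_apply, vec11_five, vec11_nine] using hk
  have h5 : ∀ i : Fin 3, x (Sum.inr (2, i)) = 0 := by
    intro i
    have hk := key 5 i
    fin_cases i <;>
      simpa [NStar1, Matrix.mulVec, dotProduct, Fintype.sum_sum_type, Fintype.sum_prod_type,
        Fin.sum_univ_succ, -Matrix.cons_val', Matrix.one_apply, vec11_five, vec11_nine, ha] using hk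
  funext j
  rcases j with j | ⟨c, i⟩
  · rw [Fin.fin_one_eq_zero j]; exact ha
  · fin_cases c
    · exact h2 i
    · exact h9 i
    · exact h5 i

/-- If `g ≠ 0`, the 33×10 matrix `N*₁` has rank 10 for every `R_G` and `p_F`;
in particular `N*₁ᵀ N*₁` is invertible. -/
theorem NStar1_rank_ten (g : V3) (hg : g ≠ 0) (RG : M3) (pF : V3) :
    (NStar1 g pF RG).rank = 10 ∧ IsUnit ((NStar1 g pF RG)ᵀ * NStar1 g pF RG) := by
  have hinj : Function.Injective (NStar1 g pF RG).mulVecLin := by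
    rw [← LinearMap.ker_eq_bot, LinearMap.ker_eq_bot']
    intro x hx
    exact NStar1_inj g pF hg RG x hx
  constructor
  · rw [Matrix.rank, LinearMap.finrank_range_of_inj hinj,
      Module.finrank_fintype_fun_eq_card]
    decide
  · refine Matrix.mulVec_injective_iff_isUnit.1 ?_
    have h1 : LinearMap.ker (((NStar1 g pF RG)ᵀ * NStar1 g pF RG).mulVecLin) = ⊥ := by
      rw [Matrix.ker_mulVecLin_transpose_mul_self]
      exact LinearMap.ker_eq_bot.2 hinj
    exact LinearMap.ker_eq_bot.1 h1
end

section
/- (The keyframe Jacobian automatically satisfies the observability constraint for the observability-constrained null space.) Fix g, p_F ∈ ℝ³ and a first-estimate matrix R̂_{G0} ∈ ℝ^{3×3}. For every J* ∈ ℝ^{2×3} and every R_KF ∈ ℝ^{3×3}, the keyframe map-feature Jacobian evaluated with the fixed map-feature value p̂_F = p_F, namely H^{KF} = −J* R_KFᵀ [0₃ 0₃ 0₃ 0₃ 0₃ 0₃ 0₃ 0₃ −(p_F)_× I₃ −I₃], satisfies H^{KF} N*₃ = 0. -/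
open Matrix

/-!
The keyframe Jacobian only sees the block rows `θKF`, `pKF`, `F` of `N*₁(R_G)`, and for every
`R_G` the feature row is the keyframe-position row minus `(p_F)_×` times the keyframe-orientation
row. That is exactly the combination `−(p_F)_× ξ_θKF + ξ_pKF − ξ_F` taken by the Jacobian, so the
product vanishes whatever the left factor `−J* R_KFᵀ` is.
-/

theorem rowJac_eq_mul (B : Matrix (Fin 2) (Fin 3) ℝ) (f : Fin 11 → M3) :
    rowJac B f = B * Matrix.of fun i p => f p.1 i p.2 := by
  ext r p
  simp [rowJac, mul_apply]

theorem rowJac_mul {ι : Type*} (B : Matrix (Fin 2) (Fin 3) ℝ) (f : Fin 11 → M3)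
    (N : Matrix Idx33 ι ℝ) :
    rowJac B f * N = B * ∑ k, f k * N.submatrix (k, ·) id := by
  rw [rowJac_eq_mul, Matrix.mul_assoc]
  congr 1
  ext i j
  simp [mul_apply, Fintype.sum_prod_type, Matrix.sum_apply]

theorem NStar1_feature_row (g pF : V3) (RG : M3) :
    (NStar1 g pF RG).submatrix (10, ·) id =
      (NStar1 g pF RG).submatrix (9, ·) id - skew pF * (NStar1 g pF RG).submatrix (8, ·) id := by
  ext i (_ | ⟨q, c⟩) <;>
    simp only [NStar1, Matrix.sub_apply, submatrix_apply, of_apply, id, Sum.elim_inl,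
      Sum.elim_inr, Matrix.cons_val, mul_apply]
  · simp
  · fin_cases q <;> simp only [Fin.zero_eta, Fin.mk_one, Fin.reduceFinMk, Matrix.cons_val] <;>
      simp [mul_apply]

/-- The keyframe map-feature Jacobian automatically satisfies the observability
constraint for the observability-constrained null space `N*₃ = N*₁(R̂_{G0})`. -/
theorem HKF_annihilates_NStar3 (g pF : V3) (RG0 : M3)
    (Jstar : Matrix (Fin 2) (Fin 3) ℝ) (RKF : M3) :
    rowJac (-(Jstar * RKFᵀ))
        ![0, 0, 0, 0, 0, 0, 0, 0, -skew pF, 1, -1] * NStar1 g pF RG0 = 0 := by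
  have hblocks : ∑ k, (![0, 0, 0, 0, 0, 0, 0, 0, -skew pF, 1, -1] : Fin 11 → M3) k *
      (NStar1 g pF RG0).submatrix (k, ·) id = 0 := by
    simp [Fin.sum_univ_succ, NStar1_feature_row]
  rw [rowJac_mul, hblocks, Matrix.mul_zero]
end

section
/- (The local Jacobian and the state transition naturally satisfy the observability constraints for the observability-constrained null space.) Fix g, p_F ∈ ℝ³ and a first-estimate matrix R̂_{G0} ∈ ℝ^{3×3}. For arbitrary J ∈ ℝ^{2×3} and arbitrary estimates R̂_I ∈ ℝ^{3×3}, v̂, p̂_I, p̂_f, p̂_G ∈ ℝ³: (i) the extended local-feature Jacobian H_L = −J R̂_Iᵀ [0₃ 0₃ I₃ −I₃ 0₃ 0₃ 0₃ 0₃ 0₃ 0₃ 0₃] satisfies H_L N*₃ = 0, and (ii) the 33×33 imperfect-system propagation matrix A* satisfies A* N*₃ = 0, hence exp(δ A*) N*₃ = N*₃ for every δ ∈ ℝ. -/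
open Matrix

section Aux


/-!
Both claims are block computations. In `H_L N*₃` the factor `[0 0 I −I 0 ⋯]` takes the
difference of the `p`- and `pf`-rows of `N*₃`, which coincide. In `A* N*₃` every nonzero block
column of `A*` other than `θ` meets a zero block row of `N*₃`, and the `θ` column contributes
`(g)_× g = g × g = 0`. Since `A*` annihilates `N*₃`, so does every
positive power of `δ A*`, and only the constant term of the exponential series survives.
-/

theorem skew_mulVec (a b : V3) : skew a *ᵥ b = a ⨯₃ b := by
  ext i
  fin_cases i <;> simp [skew, cross_apply, mulVec, dotProduct, Fin.sum_univ_three] <;> ring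

theorem skew_mulVec_self (a : V3) : skew a *ᵥ a = 0 := by
  rw [skew_mulVec, cross_self]

open scoped Norms.Operator in
theorem Matrix.exp_mul_eq_self_of_mul_eq_zero {𝕂 m n : Type*} [RCLike 𝕂] [Fintype m]
    [DecidableEq m] [Fintype n] {A : Matrix m m 𝕂} {N : Matrix m n 𝕂} (h : A * N = 0) :
    NormedSpace.exp A * N = N := by
  have hseries : HasSum (fun k : ℕ => ((k.factorial : 𝕂)⁻¹ • A ^ k) * N) (NormedSpace.exp A * N) :=
    (NormedSpace.exp_series_hasSum_exp' (𝕂 := 𝕂) A).map (addMonoidHomMulRight N)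
      (continuous_id.matrix_mul continuous_const)
  have htail : ∀ k ≠ 0, ((k.factorial : 𝕂)⁻¹ • A ^ k) * N = 0 := by
    intro k hk
    obtain ⟨j, rfl⟩ := Nat.exists_eq_succ_of_ne_zero hk
    rw [smul_mul, pow_succ, Matrix.mul_assoc, h, Matrix.mul_zero, smul_zero]
  simpa using hseries.unique (hasSum_single 0 htail)

def bmCols10 (c : Fin 11 → V3) (blk : Fin 11 → Fin 3 → M3) : Matrix Idx33 Cols10 ℝ :=
  Matrix.of fun p j => Sum.elim (fun _ => c p.1 p.2) (fun q => blk p.1 q.1 p.2 q.2) j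

theorem bmCols10_zero : bmCols10 0 0 = 0 := by
  ext p (_ | _) <;> rfl

theorem NStar1_eq_bmCols10 (g pF : V3) (RG : M3) :
    NStar1 g pF RG = bmCols10 ![g, 0, 0, 0, 0, g, 0, 0, 0, 0, 0]
      ![![0, 0, 0], ![0, 0, 0], ![1, 0, 0], ![1, 0, 0], ![1, -RG, 0],
        ![0, 0, 1], ![0, 0, 0], ![0, 0, 0], ![0, 0, -RGᵀ], ![0, 1, 0],
        ![0, 1, skew pF * RGᵀ]] := rfl

theorem bm11_mul_bmCols10 (f : Fin 11 → Fin 11 → M3) (c : Fin 11 → V3)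
    (blk : Fin 11 → Fin 3 → M3) :
    bm11 f * bmCols10 c blk =
      bmCols10 (fun i => ∑ k, f i k *ᵥ c k) (fun i q => ∑ k, f i k * blk k q) := by
  ext ⟨i, a⟩ (_ | ⟨q, b⟩) <;>
    simp [bm11, bmCols10, mul_apply, mulVec, dotProduct, Fintype.sum_prod_type, Matrix.sum_apply]

theorem rowJac_mul_bmCols10_eq_zero (B : Matrix (Fin 2) (Fin 3) ℝ) {f : Fin 11 → M3}
    {c : Fin 11 → V3} {blk : Fin 11 → Fin 3 → M3} (hc : ∑ k, f k *ᵥ c k = 0)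
    (hblk : ∀ q, ∑ k, f k * blk k q = 0) :
    rowJac B f * bmCols10 c blk = 0 := by
  ext r (_ | ⟨q, b⟩)
  · have hr : (B *ᵥ ∑ k, f k *ᵥ c k) r = 0 := by rw [hc, mulVec_zero]; rfl
    simp only [mulVec_sum, mulVec_mulVec, Finset.sum_apply] at hr
    rw [mul_apply, Fintype.sum_prod_type]
    simpa [rowJac, bmCols10, mulVec, dotProduct] using hr
  · have hrb : (B * ∑ k, f k * blk k q) r b = 0 := by rw [hblk q, Matrix.mul_zero]; rfl
    simp only [Matrix.mul_sum, ← Matrix.mul_assoc, Matrix.sum_apply] at hrb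
    rw [mul_apply, Fintype.sum_prod_type]
    simpa [rowJac, bmCols10, mul_apply] using hrb

theorem rowJac_mul_NStar1 (g pF : V3) (RG : M3) (J : Matrix (Fin 2) (Fin 3) ℝ) (RI : M3) :
    rowJac (-(J * RIᵀ)) ![0, 0, 1, -1, 0, 0, 0, 0, 0, 0, 0] * NStar1 g pF RG = 0 := by
  rw [NStar1_eq_bmCols10]
  refine rowJac_mul_bmCols10_eq_zero _ ?_ fun q => ?_
  · simp [Fin.sum_univ_succ]
  · fin_cases q <;> simp [Fin.sum_univ_succ]

theorem AStar_mul_NStar1 (g pF : V3) (RG RI : M3) (v pI pf pG : V3) :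
    AStar g RI v pI pf pG * NStar1 g pF RG = 0 := by
  rw [AStar, NStar1_eq_bmCols10, bm11_mul_bmCols10, ← bmCols10_zero]
  congr 1
  · funext i
    fin_cases i <;> simp [Fin.sum_univ_succ, skew_mulVec_self]
  · funext i q
    fin_cases i <;> fin_cases q <;> simp [Fin.sum_univ_succ]

/-- The local Jacobian and the state transition naturally satisfy the observability
constraints for the observability-constrained null space `N*₃ = N*₁(R̂_{G0})`. -/
theorem HL_AStar_annihilate_NStar3 (g pF : V3) (RG0 : M3)
    (J : Matrix (Fin 2) (Fin 3) ℝ) (RI : M3) (v pI pf pG : V3) :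
    rowJac (-(J * RIᵀ)) ![0, 0, 1, -1, 0, 0, 0, 0, 0, 0, 0] * NStar1 g pF RG0 = 0 ∧
    AStar g RI v pI pf pG * NStar1 g pF RG0 = 0 ∧
    ∀ δ : ℝ, NormedSpace.exp (δ • AStar g RI v pI pf pG) * NStar1 g pF RG0 =
      NStar1 g pF RG0 := by
  have hA := AStar_mul_NStar1 g pF RG0 RI v pI pf pG
  refine ⟨rowJac_mul_NStar1 g pF RG0 J RI, hA, fun δ => ?_⟩
  exact Matrix.exp_mul_eq_self_of_mul_eq_zero (by rw [smul_mul, hA, smul_zero])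
end Aux
end
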